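/- arXiv:1810.03593 — 4 statements merged into one kernel-verified Lean document; each statement's English description precedes it below -/
import Mathlib

section
/- Let fε : ℝ → ℝ be defined by fε(x) = f(x, x/ε) where f : ℝ × ℝ → ℝ is continuous and periodic with period 1 in its second argument. Then for every interval [a,b], the average (1/(b−a))∫ₐᵇ fε(x) dx converges as ε → 0 to (1/(b−a))∫ₐᵇ (∫₀¹ f(x,y) dy) dx. -/
/-!
For a single continuous 1-periodic `g`, the primitive of `g` minus its mean is periodic, hence
bounded, so `∫ t in c..d, g (t / ε) = (d - c) * ∫ y in 0..1, g y + O(ε)`. For general `f`,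
periodicity reduces `y` to the compact `[0, 1]`, so `f x y` is uniformly continuous in `x`
uniformly in `y`; freezing `x` on the cells of a fine partition of `[a, b]` then costs at most
`η * (b - a)`, both before and after the limit.
-/

open Set Filter Function Topology MeasureTheory intervalIntegral

theorem tendsto_of_forall_dist_le {α β : Type*} [PseudoMetricSpace β] {l : Filter α}
    {u : α → β} {c : β}
    (h : ∀ η > 0, ∃ (v : α → β) (d : β), Tendsto v l (𝓝 d) ∧
      (∀ᶠ x in l, dist (u x) (v x) ≤ η) ∧ dist d c ≤ η) :
    Tendsto u l (𝓝 c) := by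
  refine Metric.tendsto_nhds.2 fun η hη => ?_
  obtain ⟨v, d, hvd, huv, hdc⟩ := h (η / 4) (by positivity)
  filter_upwards [huv, Metric.tendsto_nhds.1 hvd (η / 4) (by positivity)] with x hux hvx
  calc dist (u x) c ≤ dist (u x) (v x) + dist (v x) d + dist d c := dist_triangle4 _ _ _ _
    _ < η := by linarith

theorem IsCompact.exists_forall_dist_lt_of_periodic {α β : Type*} [PseudoMetricSpace α]
    [PseudoMetricSpace β] {f : α → ℝ → β} (hf : Continuous (uncurry f))
    (hper : ∀ x, Periodic (f x) 1) {s : Set α} (hs : IsCompact s) {η : ℝ} (hη : 0 < η) :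
    ∃ δ > 0, ∀ x ∈ s, ∀ x' ∈ s, dist x x' < δ → ∀ y, dist (f x y) (f x' y) < η := by
  obtain ⟨δ, hδ, hfδ⟩ := Metric.uniformContinuousOn_iff.1
    ((hs.prod isCompact_Icc).uniformContinuousOn_of_continuous hf.continuousOn) η hη
  refine ⟨δ, hδ, fun x hx x' hx' hxx' y => ?_⟩
  have hy : Int.fract y ∈ Icc (0 : ℝ) 1 := ⟨Int.fract_nonneg y, (Int.fract_lt_one y).le⟩
  have hfract : ∀ z, f z (Int.fract y) = f z y := fun z => by
    simpa using (hper z).sub_int_mul_eq (n := ⌊y⌋) (x := y)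
  rw [← hfract x, ← hfract x']
  refine hfδ (x, Int.fract y) ⟨hx, hy⟩ (x', Int.fract y) ⟨hx', hy⟩ ?_
  simpa [Prod.dist_eq] using hxx'

theorem exists_monotone_partition_sub_lt {a b δ : ℝ} (hab : a ≤ b) (hδ : 0 < δ) :
    ∃ (n : ℕ) (X : ℕ → ℝ), Monotone X ∧ X 0 = a ∧ X n = b ∧ ∀ i, X (i + 1) - X i < δ := by
  obtain ⟨n, hn⟩ := exists_nat_gt ((b - a) / δ)
  have hn0 : (0 : ℝ) < n := (div_nonneg (sub_nonneg.2 hab) hδ.le).trans_lt hn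
  have hmesh : 0 ≤ (b - a) / n := div_nonneg (sub_nonneg.2 hab) hn0.le
  refine ⟨n, fun i => a + i * ((b - a) / n), fun i j hij => ?_, by simp, ?_, fun i => ?_⟩
  · dsimp only
    gcongr
  · field_simp
    ring
  · rw [div_lt_iff₀ hδ, mul_comm] at hn
    simpa [add_mul, div_lt_iff₀ hn0] using hn

section

variable {E : Type*} [NormedAddCommGroup E] [NormedSpace ℝ E]

theorem dist_intervalIntegral_le_of_dist_le {φ ψ : ℝ → E} {a b C : ℝ}
    (hφ : IntervalIntegrable φ volume a b) (hψ : IntervalIntegrable ψ volume a b)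
    (h : ∀ t ∈ uIoc a b, dist (φ t) (ψ t) ≤ C) :
    dist (∫ t in a..b, φ t) (∫ t in a..b, ψ t) ≤ C * |b - a| := by
  rw [dist_eq_norm, ← integral_sub hφ hψ]
  exact norm_integral_le_of_norm_le_const fun t ht => dist_eq_norm (φ t) (ψ t) ▸ h t ht

theorem dist_intervalIntegral_sum_le_of_monotone {φ : ℝ → E} {ψ : ℕ → ℝ → E} {X : ℕ → ℝ}
    {n : ℕ} {C : ℝ} (hX : Monotone X)
    (hφ : ∀ i < n, IntervalIntegrable φ volume (X i) (X (i + 1)))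
    (hψ : ∀ i < n, IntervalIntegrable (ψ i) volume (X i) (X (i + 1)))
    (h : ∀ i < n, ∀ t ∈ Icc (X i) (X (i + 1)), dist (φ t) (ψ i t) ≤ C) :
    dist (∫ t in X 0..X n, φ t) (∑ i ∈ Finset.range n, ∫ t in X i..X (i + 1), ψ i t) ≤
      C * (X n - X 0) := by
  rw [← Finset.sum_range_sub, Finset.mul_sum, ← sum_integral_adjacent_intervals hφ]
  refine (dist_sum_sum_le _ _ _).trans (Finset.sum_le_sum fun i hi => ?_)
  have hi := Finset.mem_range.1 hi
  have hXi : X i ≤ X (i + 1) := hX i.le_succ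
  rw [← abs_of_nonneg (sub_nonneg.2 hXi)]
  exact dist_intervalIntegral_le_of_dist_le (hφ i hi) (hψ i hi)
    fun t ht => h i hi t (Ioc_subset_Icc_self (uIoc_of_le hXi ▸ ht))

variable {g : ℝ → E}

theorem Function.Periodic.tendsto_smul_intervalIntegral_div (hg : Continuous g)
    (hp : Periodic g 1) (s : ℝ) :
    Tendsto (fun ε : ℝ => ε • ∫ t in 0..s / ε, g t) (𝓝[>] 0)
      (𝓝 (s • ∫ t in 0..1, g t)) := by
  set M := ∫ t in 0..1, g t
  set G : ℝ → E := fun t => (∫ u in 0..t, g u) - t • M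
  have hGper : Periodic G 1 := fun t => by
    simp only [G, hp.intervalIntegral_add_eq_add 0 t hg.intervalIntegrable, zero_add, add_smul,
      one_smul, M]
    abel
  have hGcont : Continuous G := (continuous_primitive hg.intervalIntegrable 0).sub (by fun_prop)
  obtain ⟨K, hK⟩ :=
    isBounded_iff_forall_norm_le.1 (hGper.isBounded_of_continuous one_ne_zero hGcont)
  have hsmulG : Tendsto (fun ε : ℝ => ε • G (s / ε)) (𝓝[>] 0) (𝓝 0) :=
    (tendsto_nhdsWithin_of_tendsto_nhds tendsto_id).zero_smul_isBoundedUnder_le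
      (isBoundedUnder_of ⟨K, fun ε => hK _ (mem_range_self _)⟩)
  have hlim : Tendsto (fun ε : ℝ => ε • G (s / ε) + s • M) (𝓝[>] 0) (𝓝 (s • M)) := by
    simpa using hsmulG.add_const (s • M)
  refine hlim.congr' ?_
  filter_upwards [self_mem_nhdsWithin] with ε (hε : 0 < ε)
  simp only [G, smul_sub, smul_smul, mul_div_cancel₀ s hε.ne']
  abel

theorem Function.Periodic.tendsto_intervalIntegral_comp_div [CompleteSpace E] (hg : Continuous g)
    (hp : Periodic g 1) (c d : ℝ) :
    Tendsto (fun ε : ℝ => ∫ t in c..d, g (t / ε)) (𝓝[>] 0)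
      (𝓝 ((d - c) • ∫ t in 0..1, g t)) := by
  rw [sub_smul]
  refine ((hp.tendsto_smul_intervalIntegral_div hg d).sub
    (hp.tendsto_smul_intervalIntegral_div hg c)).congr' ?_
  filter_upwards [self_mem_nhdsWithin] with ε (hε : 0 < ε)
  rw [integral_comp_div _ hε.ne', ← smul_sub,
    integral_interval_sub_left (hg.intervalIntegrable _ _) (hg.intervalIntegrable _ _)]

theorem tendsto_intervalIntegral_comp_div_of_periodic [CompleteSpace E] {f : ℝ → ℝ → E}
    (hf : Continuous (uncurry f)) (hper : ∀ x, Periodic (f x) 1) (a b : ℝ) :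
    Tendsto (fun ε : ℝ => ∫ x in a..b, f x (x / ε)) (𝓝[>] 0)
      (𝓝 (∫ x in a..b, ∫ y in 0..1, f x y)) := by
  wlog hab : a ≤ b generalizing a b
  · simpa only [integral_symm b a, neg_neg] using (this b a (le_of_not_ge hab)).neg
  have hslice : ∀ x, Continuous (f x) := fun x => hf.comp (Continuous.prodMk_right x)
  have havg : Continuous fun x => ∫ y in 0..1, f x y :=
    continuous_parametric_intervalIntegral_of_continuous' hf 0 1
  refine tendsto_of_forall_dist_le fun η hη => ?_
  set η' := η / (b - a + 1)
  have hη' : η' * (b - a) ≤ η := by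
    rw [div_mul_eq_mul_div, div_le_iff₀ (by linarith)]; nlinarith
  obtain ⟨δ, hδ, hfδ⟩ := isCompact_Icc.exists_forall_dist_lt_of_periodic hf hper
    (s := Icc a b) (η := η') (by positivity)
  obtain ⟨n, X, hX, hX0, hXn, hXδ⟩ := exists_monotone_partition_sub_lt hab hδ
  have hcell : ∀ i < n, ∀ t ∈ Icc (X i) (X (i + 1)), ∀ y, dist (f t y) (f (X i) y) < η' := by
    intro i hi t ht
    have hXab : Icc (X i) (X (i + 1)) ⊆ Icc a b :=
      hX0 ▸ hXn ▸ Icc_subset_Icc (hX i.zero_le) (hX hi)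
    refine hfδ t (hXab ht) (X i) (hXab (left_mem_Icc.2 (hX i.le_succ))) ?_
    rw [Real.dist_eq, abs_of_nonneg (sub_nonneg.2 ht.1)]
    linarith [ht.2, hXδ i]
  have hcell_avg : ∀ i < n, ∀ t ∈ Icc (X i) (X (i + 1)),
      dist (∫ y in 0..1, f t y) (∫ y in 0..1, f (X i) y) ≤ η' := by
    intro i hi t ht
    simpa using dist_intervalIntegral_le_of_dist_le ((hslice t).intervalIntegrable 0 1)
      ((hslice (X i)).intervalIntegrable 0 1) fun y _ => (hcell i hi t ht y).le
  refine ⟨fun ε => ∑ i ∈ Finset.range n, ∫ t in X i..X (i + 1), f (X i) (t / ε),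
    ∑ i ∈ Finset.range n, ∫ t in X i..X (i + 1), ∫ y in 0..1, f (X i) y, ?_, ?_, ?_⟩
  · refine tendsto_finsetSum _ fun i _ => ?_
    simpa using (hper (X i)).tendsto_intervalIntegral_comp_div (hslice (X i)) (X i) (X (i + 1))
  · refine Eventually.of_forall fun ε => ?_
    have hdist := dist_intervalIntegral_sum_le_of_monotone hX
      (fun i _ => (by fun_prop : Continuous fun x => f x (x / ε)).intervalIntegrable _ _)
      (fun i _ => ((hslice (X i)).comp (continuous_id.div_const ε)).intervalIntegrable _ _)
      fun i hi t ht => (hcell i hi t ht _).le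
    rw [hX0, hXn] at hdist
    exact hdist.trans hη'
  · have hdist := dist_intervalIntegral_sum_le_of_monotone hX
      (fun i _ => havg.intervalIntegrable _ _)
      (fun i _ => intervalIntegrable_const) hcell_avg
    rw [hX0, hXn, dist_comm] at hdist
    exact hdist.trans hη'

end

theorem periodic_averaging_general (f : ℝ → ℝ → ℝ)
    (hf : Continuous fun p : ℝ × ℝ => f p.1 p.2)
    (hper : ∀ x y : ℝ, f x (y + 1) = f x y)
    (a b : ℝ) :
    Tendsto (fun ε : ℝ => (b - a)⁻¹ * ∫ x in a..b, f x (x / ε))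
      (nhdsWithin 0 (Ioi 0))
      (nhds ((b - a)⁻¹ * ∫ x in a..b, ∫ y in (0:ℝ)..1, f x y)) :=
  (tendsto_intervalIntegral_comp_div_of_periodic hf hper a b).const_mul _

/-- Basic averaging lemma of periodic homogenization: for f continuous and
1-periodic in its second argument, the averages of x ↦ f(x, x/ε) over [a,b]
converge, as ε → 0⁺, to the average of the cell average. -/
theorem periodic_averaging (f : ℝ → ℝ → ℝ)
    (hf : Continuous fun p : ℝ × ℝ => f p.1 p.2)
    (hper : ∀ x y : ℝ, f x (y + 1) = f x y)
    (a b : ℝ) (hab : a < b) :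
    Tendsto (fun ε : ℝ => (b - a)⁻¹ * ∫ x in a..b, f x (x / ε))
      (nhdsWithin 0 (Ioi 0))
      (nhds ((b - a)⁻¹ * ∫ x in a..b, ∫ y in (0:ℝ)..1, f x y)) :=
  periodic_averaging_general f hf hper a b
end

section
/- Let g : ℝ → ℝ be continuous and 1-periodic. Then the functions gε(x) := g(x/ε) converge weakly in L²(0,1) to the constant ∫₀¹ g(y) dy as ε → 0; that is, for every h ∈ L²(0,1), ∫₀¹ g(x/ε) h(x) dx → ∫₀¹ (∫₀¹ g dy) h(x) dx. -/
open Set Filter MeasureTheory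

private lemma periodic_bound {f : ℝ → ℝ} (hf : Continuous f) (hp : Function.Periodic f 1) :
    ∃ C : ℝ, 0 ≤ C ∧ ∀ t, |f t| ≤ C := by
  obtain ⟨C, hC⟩ :=
    (isCompact_Icc (a := (0:ℝ)) (b := 1)).exists_bound_of_continuousOn hf.continuousOn
  refine ⟨C, le_trans (norm_nonneg _) (hC 0 (by norm_num)), fun t => ?_⟩
  have h1 : f (Int.fract t) = f t := by
    have h0 := hp.sub_int_mul_eq (x := t) ⌊t⌋
    rw [mul_one, Int.self_sub_floor] at h0
    exact h0
  have h2 : Int.fract t ∈ Icc (0:ℝ) 1 :=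
    ⟨Int.fract_nonneg t, (Int.fract_lt_one t).le⟩
  calc |f t| = ‖f (Int.fract t)‖ := by rw [h1, Real.norm_eq_abs]
    _ ≤ C := hC _ h2

private lemma poly_key (g : ℝ → ℝ) (hg : Continuous g) (hper : Function.Periodic g 1)
    (p : Polynomial ℝ) :
    Tendsto (fun ε : ℝ => ∫ x in (0:ℝ)..1, g (x / ε) * p.eval x) (nhdsWithin 0 (Ioi 0))
      (nhds ((∫ y in (0:ℝ)..1, g y) * ∫ x in (0:ℝ)..1, p.eval x)) := by
  set c : ℝ := ∫ y in (0:ℝ)..1, g y with hc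
  set G : ℝ → ℝ := fun t => ∫ y in (0:ℝ)..t, (g y - c) with hG
  have hgc : Continuous fun y => g y - c := hg.sub continuous_const
  have hint : ∀ a b : ℝ, IntervalIntegrable (fun y => g y - c) volume a b :=
    fun a b => hgc.intervalIntegrable a b
  have hGcont : Continuous G := intervalIntegral.continuous_primitive hint 0
  have hGd : ∀ t : ℝ, HasDerivAt G (g t - c) t := fun t =>
    intervalIntegral.integral_hasDerivAt_right (hint 0 t)
      (hgc.stronglyMeasurableAtFilter _ _) hgc.continuousAt
  have hpc : Function.Periodic (fun y => g y - c) 1 := fun x => by simp [hper x]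
  have hGper : Function.Periodic G 1 := by
    intro t
    have h1 : G t + (∫ y in t..(t+1), (g y - c)) = G (t+1) :=
      intervalIntegral.integral_add_adjacent_intervals (hint 0 t) (hint t (t+1))
    have h2 : (∫ y in t..(t+1), (g y - c)) = ∫ y in (0:ℝ)..(0+1), (g y - c) :=
      hpc.intervalIntegral_add_eq t 0
    have h3 : (∫ y in (0:ℝ)..(0+1), (g y - c)) = 0 := by
      rw [zero_add, intervalIntegral.integral_sub (hg.intervalIntegrable 0 1)
        intervalIntegrable_const]
      simp [hc]
    rw [← h1, h2, h3, add_zero]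
  obtain ⟨C, hC0, hCb⟩ := periodic_bound hGcont hGper
  obtain ⟨D, hD⟩ :=
    (isCompact_Icc (a := (0:ℝ)) (b := 1)).exists_bound_of_continuousOn
      (p.derivative.continuous).continuousOn
  have hD0 : 0 ≤ D := le_trans (norm_nonneg _) (hD 0 (by norm_num))
  have key : ∀ ε : ℝ, ε ∈ Ioi (0:ℝ) →
      ‖(∫ x in (0:ℝ)..1, g (x / ε) * p.eval x) - c * ∫ x in (0:ℝ)..1, p.eval x‖
        ≤ ε * (C * (|p.eval 1| + D)) := by
    intro ε hε
    have hε0 : (0:ℝ) < ε := hε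
    have hεne : ε ≠ 0 := ne_of_gt hε0
    set F : ℝ → ℝ := fun x => ε * G (x / ε) with hF
    have hgec : Continuous fun x : ℝ => g (x / ε) := hg.comp (continuous_id.div_const ε)
    have hFd : ∀ x : ℝ, HasDerivAt F (g (x / ε) - c) x := by
      intro x
      have h1 : HasDerivAt (fun x : ℝ => x / ε) (1 / ε) x := by
        simpa using (hasDerivAt_id x).div_const ε
      have h2 : HasDerivAt (fun x : ℝ => G (x / ε)) ((g (x / ε) - c) * (1 / ε)) x :=
        by have := (hGd (x / ε)).comp x h1; exact this
      have h3 := h2.const_mul ε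
      have : ε * ((g (x / ε) - c) * (1 / ε)) = g (x / ε) - c := by
        field_simp
      rwa [this] at h3
    have hparts := intervalIntegral.integral_mul_deriv_eq_deriv_mul
      (u := F) (u' := fun x => g (x / ε) - c) (v := fun x => p.eval x)
      (v' := fun x => p.derivative.eval x)
      (fun x _ => hFd x) (fun x _ => p.hasDerivAt x)
      ((hgec.sub continuous_const).intervalIntegrable 0 1)
      (p.derivative.continuous.intervalIntegrable 0 1)
    -- hparts : ∫ F * p' = F 1 * p 1 - F 0 * p 0 - ∫ (gε - c) * p
    have hF0 : F 0 = 0 := by simp [hF, hG]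
    have hsplit : (∫ x in (0:ℝ)..1, (g (x / ε) - c) * p.eval x)
        = (∫ x in (0:ℝ)..1, g (x / ε) * p.eval x) - c * ∫ x in (0:ℝ)..1, p.eval x := by
      have : ∀ x : ℝ, (g (x / ε) - c) * p.eval x
          = g (x / ε) * p.eval x - c * p.eval x := fun x => by ring
      rw [intervalIntegral.integral_congr (fun x _ => this x),
        intervalIntegral.integral_sub (f := fun x => g (x / ε) * p.eval x) (g := fun x => c * p.eval x)
          ((hgec.mul p.continuous).intervalIntegrable 0 1)
          ((continuous_const.mul p.continuous).intervalIntegrable 0 1),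
        intervalIntegral.integral_const_mul]
    have heq : (∫ x in (0:ℝ)..1, g (x / ε) * p.eval x) - c * ∫ x in (0:ℝ)..1, p.eval x
        = F 1 * p.eval 1 - ∫ x in (0:ℝ)..1, F x * p.derivative.eval x := by
      rw [← hsplit]
      have := hparts
      rw [hF0] at this
      linarith [this]
    rw [heq]
    have hFb : ∀ x : ℝ, |F x| ≤ ε * C := by
      intro x
      rw [hF, abs_mul, abs_of_pos hε0]
      exact mul_le_mul_of_nonneg_left (hCb _) hε0.le
    have hIb : ‖∫ x in (0:ℝ)..1, F x * p.derivative.eval x‖ ≤ ε * C * D := by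
      have hb : ∀ x ∈ Set.uIoc (0:ℝ) 1, ‖F x * p.derivative.eval x‖ ≤ ε * C * D := by
        intro x hx
        have hx' : x ∈ Icc (0:ℝ) 1 := by
          rw [Set.uIoc_of_le (by norm_num : (0:ℝ) ≤ 1)] at hx
          exact ⟨hx.1.le, hx.2⟩
        rw [norm_mul]
        have h1 : ‖F x‖ ≤ ε * C := by rw [Real.norm_eq_abs]; exact hFb x
        have h2 : ‖p.derivative.eval x‖ ≤ D := hD x hx'
        exact mul_le_mul h1 h2 (norm_nonneg _) (by positivity)
      calc ‖∫ x in (0:ℝ)..1, F x * p.derivative.eval x‖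
          ≤ ε * C * D * |1 - 0| := intervalIntegral.norm_integral_le_of_norm_le_const hb
        _ = ε * C * D := by norm_num
    calc ‖F 1 * p.eval 1 - ∫ x in (0:ℝ)..1, F x * p.derivative.eval x‖
        ≤ ‖F 1 * p.eval 1‖ + ‖∫ x in (0:ℝ)..1, F x * p.derivative.eval x‖ := norm_sub_le _ _
      _ ≤ ε * C * |p.eval 1| + ε * C * D := by
          gcongr
          rw [norm_mul, Real.norm_eq_abs, Real.norm_eq_abs]
          exact mul_le_mul_of_nonneg_right (hFb 1) (abs_nonneg _)
      _ = ε * (C * (|p.eval 1| + D)) := by ring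
  have hlim : Tendsto (fun ε : ℝ => ε * (C * (|p.eval 1| + D))) (nhdsWithin 0 (Ioi 0))
      (nhds 0) := by
    have : Tendsto (fun ε : ℝ => ε * (C * (|p.eval 1| + D))) (nhds 0)
        (nhds (0 * (C * (|p.eval 1| + D)))) :=
      (continuous_id.mul continuous_const).tendsto 0
    rw [zero_mul] at this
    exact this.mono_left nhdsWithin_le_nhds
  have hsq := squeeze_zero_norm' (eventually_nhdsWithin_of_forall key) hlim
  exact tendsto_sub_nhds_zero_iff.mp hsq

/-- Weak L²(0,1) convergence of oscillating periodic functions to their mean. -/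
theorem periodic_weak_L2_convergence (g : ℝ → ℝ) (hg : Continuous g)
    (hper : ∀ y : ℝ, g (y + 1) = g y) :
    ∀ h : ℝ → ℝ, MemLp h 2 (volume.restrict (Ioc (0:ℝ) 1)) →
      Tendsto (fun ε : ℝ => ∫ x in Ioc (0:ℝ) 1, g (x / ε) * h x)
        (nhdsWithin 0 (Ioi 0))
        (nhds (∫ x in Ioc (0:ℝ) 1, (∫ y in (0:ℝ)..1, g y) * h x)) := by
  intro h hmem
  have hper' : Function.Periodic g 1 := hper
  obtain ⟨M, hM0, hMb⟩ := periodic_bound hg hper'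
  set c : ℝ := ∫ y in (0:ℝ)..1, g y with hc
  haveI hfin : IsFiniteMeasure (volume.restrict (Ioc (0:ℝ) 1)) := by
    constructor
    rw [Measure.restrict_apply_univ]
    simp [Real.volume_Ioc]
  have hint : Integrable h (volume.restrict (Ioc (0:ℝ) 1)) :=
    hmem.integrable (by norm_num)
  have htarget : (∫ x in Ioc (0:ℝ) 1, c * h x) = c * ∫ x in Ioc (0:ℝ) 1, h x :=
    integral_const_mul c h
  rw [htarget, Metric.tendsto_nhds]
  intro η hη
  set K : ℝ := M + |c| + 1 with hK
  have hK0 : 0 < K := by positivity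
  have hδ : 0 < η / (4 * K) := by positivity
  -- continuous approximation in L¹
  have hind : Integrable ((Ioc (0:ℝ) 1).indicator h) volume :=
    (integrable_indicator_iff measurableSet_Ioc).2 hint
  obtain ⟨φ, -, hφint, hφcont, hφInt⟩ :=
    hind.exists_hasCompactSupport_integral_sub_le hδ
  obtain ⟨p, hp⟩ := exists_polynomial_near_of_continuousOn 0 1 φ hφcont.continuousOn
    (η / (4 * K)) hδ
  -- L¹ distances
  have e1 : (∫ x in Ioc (0:ℝ) 1, |h x - φ x|) ≤ η / (4 * K) := by
    have heq : (∫ x in Ioc (0:ℝ) 1, |h x - φ x|)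
        = ∫ x in Ioc (0:ℝ) 1, ‖(Ioc (0:ℝ) 1).indicator h x - φ x‖ := by
      apply setIntegral_congr_fun measurableSet_Ioc
      intro x hx
      simp [indicator_of_mem hx, Real.norm_eq_abs]
    rw [heq]
    calc (∫ x in Ioc (0:ℝ) 1, ‖(Ioc (0:ℝ) 1).indicator h x - φ x‖)
        ≤ ∫ x, ‖(Ioc (0:ℝ) 1).indicator h x - φ x‖ :=
          setIntegral_le_integral (hind.sub hφInt).norm
            (Eventually.of_forall fun x => norm_nonneg _)
      _ ≤ η / (4 * K) := hφint
  have hpcont : Continuous fun x : ℝ => p.eval x := p.continuous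
  have e2 : (∫ x in Ioc (0:ℝ) 1, |φ x - p.eval x|) ≤ η / (4 * K) := by
    have hmono : ∀ x ∈ Ioc (0:ℝ) 1, |φ x - p.eval x| ≤ η / (4 * K) := by
      intro x hx
      have hx' : x ∈ Icc (0:ℝ) 1 := ⟨hx.1.le, hx.2⟩
      have := hp x hx'
      rw [abs_sub_comm] at this
      exact this.le
    calc (∫ x in Ioc (0:ℝ) 1, |φ x - p.eval x|)
        ≤ ∫ _x in Ioc (0:ℝ) 1, η / (4 * K) := by
          apply setIntegral_mono_on
          · exact ((hφcont.sub hpcont).abs).integrableOn_Ioc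
          · exact integrableOn_const (by simp [Real.volume_Ioc])
          · exact measurableSet_Ioc
          · exact hmono
      _ ≤ η / (4 * K) := by
          rw [setIntegral_const]
          simp [Real.volume_Ioc]
  have hpInt : Integrable (fun x => p.eval x) (volume.restrict (Ioc (0:ℝ) 1)) :=
    hpcont.integrableOn_Ioc
  have hφInt' : Integrable φ (volume.restrict (Ioc (0:ℝ) 1)) := hφcont.integrableOn_Ioc
  have e3 : (∫ x in Ioc (0:ℝ) 1, |h x - p.eval x|) ≤ η / (2 * K) := by
    have hptw : ∀ x, |h x - p.eval x| ≤ |h x - φ x| + |φ x - p.eval x| := by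
      intro x
      calc |h x - p.eval x| = |(h x - φ x) + (φ x - p.eval x)| := by ring_nf
        _ ≤ |h x - φ x| + |φ x - p.eval x| := abs_add_le _ _
    calc (∫ x in Ioc (0:ℝ) 1, |h x - p.eval x|)
        ≤ ∫ x in Ioc (0:ℝ) 1, (|h x - φ x| + |φ x - p.eval x|) :=
          integral_mono (hint.sub hpInt).abs
            ((hint.sub hφInt').abs.add (hφInt'.sub hpInt).abs) hptw
      _ = (∫ x in Ioc (0:ℝ) 1, |h x - φ x|) + ∫ x in Ioc (0:ℝ) 1, |φ x - p.eval x| :=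
          integral_add (hint.sub hφInt').abs (hφInt'.sub hpInt).abs
      _ ≤ η / (4 * K) + η / (4 * K) := add_le_add e1 e2
      _ = η / (2 * K) := by
          rw [← add_div, show η + η = 2 * η by ring,
            show (4:ℝ) * K = 2 * (2 * K) by ring,
            mul_div_mul_left _ _ (two_ne_zero)]
  -- the polynomial case
  have hpoly := poly_key g hg hper' p
  have hIoc : ∀ ε : ℝ, (∫ x in (0:ℝ)..1, g (x / ε) * p.eval x)
      = ∫ x in Ioc (0:ℝ) 1, g (x / ε) * p.eval x := fun ε =>
    intervalIntegral.integral_of_le zero_le_one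
  have hIocP : (∫ x in (0:ℝ)..1, p.eval x) = ∫ x in Ioc (0:ℝ) 1, p.eval x :=
    intervalIntegral.integral_of_le zero_le_one
  rw [hIocP] at hpoly
  have hEv1 : ∀ᶠ ε in nhdsWithin (0:ℝ) (Ioi 0),
      dist (∫ x in Ioc (0:ℝ) 1, g (x / ε) * p.eval x)
        (c * ∫ x in Ioc (0:ℝ) 1, p.eval x) < η / 2 := by
    have := (Metric.tendsto_nhds.mp hpoly) (η / 2) (by positivity)
    refine this.mono fun ε hε => ?_
    rwa [hIoc ε] at hε
  have hEv2 : ∀ᶠ ε in nhdsWithin (0:ℝ) (Ioi 0), ε ∈ Ioi (0:ℝ) := self_mem_nhdsWithin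
  filter_upwards [hEv1, hEv2] with ε hε1 hε2
  have hε0 : (0:ℝ) < ε := hε2
  have hgec : Continuous fun x : ℝ => g (x / ε) := hg.comp (continuous_id.div_const ε)
  have hgeb : ∀ x : ℝ, ‖g (x / ε)‖ ≤ M := fun x => by
    rw [Real.norm_eq_abs]; exact hMb _
  have hIgh : Integrable (fun x => g (x / ε) * h x) (volume.restrict (Ioc (0:ℝ) 1)) :=
    hint.bdd_mul hgec.aestronglyMeasurable (ae_of_all _ hgeb)
  have hIgp : Integrable (fun x => g (x / ε) * p.eval x) (volume.restrict (Ioc (0:ℝ) 1)) :=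
    hpInt.bdd_mul hgec.aestronglyMeasurable (ae_of_all _ hgeb)
  -- term 1
  have t1 : |(∫ x in Ioc (0:ℝ) 1, g (x / ε) * h x)
      - ∫ x in Ioc (0:ℝ) 1, g (x / ε) * p.eval x| ≤ M * (η / (2 * K)) := by
    have hsub : (∫ x in Ioc (0:ℝ) 1, g (x / ε) * h x)
        - (∫ x in Ioc (0:ℝ) 1, g (x / ε) * p.eval x)
        = ∫ x in Ioc (0:ℝ) 1, (g (x / ε) * h x - g (x / ε) * p.eval x) :=
      (integral_sub hIgh hIgp).symm
    rw [hsub]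
    calc |∫ x in Ioc (0:ℝ) 1, (g (x / ε) * h x - g (x / ε) * p.eval x)|
        ≤ ∫ x in Ioc (0:ℝ) 1, |g (x / ε) * h x - g (x / ε) * p.eval x| := by
          simpa only [Real.norm_eq_abs] using
            norm_integral_le_integral_norm (μ := volume.restrict (Ioc (0:ℝ) 1))
              (fun x => g (x / ε) * h x - g (x / ε) * p.eval x)
      _ ≤ ∫ x in Ioc (0:ℝ) 1, M * |h x - p.eval x| := by
          apply integral_mono (hIgh.sub hIgp).abs ((hint.sub hpInt).abs.const_mul M)
          intro x
          calc |g (x / ε) * h x - g (x / ε) * p.eval x|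
              = |g (x / ε)| * |h x - p.eval x| := by rw [← abs_mul]; ring_nf
            _ ≤ M * |h x - p.eval x| :=
              mul_le_mul_of_nonneg_right (hMb _) (abs_nonneg _)
      _ = M * ∫ x in Ioc (0:ℝ) 1, |h x - p.eval x| := integral_const_mul M _
      _ ≤ M * (η / (2 * K)) := mul_le_mul_of_nonneg_left e3 hM0
  -- term 3
  have t3 : |c * (∫ x in Ioc (0:ℝ) 1, p.eval x) - c * ∫ x in Ioc (0:ℝ) 1, h x|
      ≤ |c| * (η / (2 * K)) := by
    have hsub : c * (∫ x in Ioc (0:ℝ) 1, p.eval x) - c * (∫ x in Ioc (0:ℝ) 1, h x)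
        = c * ∫ x in Ioc (0:ℝ) 1, (p.eval x - h x) := by
      rw [integral_sub hpInt hint]; ring
    rw [hsub, abs_mul]
    apply mul_le_mul_of_nonneg_left _ (abs_nonneg c)
    calc |∫ x in Ioc (0:ℝ) 1, (p.eval x - h x)|
        ≤ ∫ x in Ioc (0:ℝ) 1, |p.eval x - h x| := by
          simpa only [Real.norm_eq_abs] using
            norm_integral_le_integral_norm (μ := volume.restrict (Ioc (0:ℝ) 1))
              (fun x => p.eval x - h x)
      _ = ∫ x in Ioc (0:ℝ) 1, |h x - p.eval x| := by
          congr 1; ext x; rw [abs_sub_comm]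
      _ ≤ η / (2 * K) := e3
  -- combine
  rw [Real.dist_eq]
  have hKne : K ≠ 0 := ne_of_gt hK0
  have hsum : (M + |c|) * (η / (2 * K)) < η / 2 := by
    have h1 : M + |c| < K := by rw [hK]; linarith
    have h2 : 0 < η / (2 * K) := by positivity
    have h3 : K * (η / (2 * K)) = η / 2 := by field_simp
    calc (M + |c|) * (η / (2 * K)) < K * (η / (2 * K)) :=
          mul_lt_mul_of_pos_right h1 h2
      _ = η / 2 := h3
  calc |(∫ x in Ioc (0:ℝ) 1, g (x / ε) * h x) - c * ∫ x in Ioc (0:ℝ) 1, h x|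
      ≤ |(∫ x in Ioc (0:ℝ) 1, g (x / ε) * h x)
          - ∫ x in Ioc (0:ℝ) 1, g (x / ε) * p.eval x|
        + |(∫ x in Ioc (0:ℝ) 1, g (x / ε) * p.eval x)
            - c * ∫ x in Ioc (0:ℝ) 1, p.eval x|
        + |c * (∫ x in Ioc (0:ℝ) 1, p.eval x) - c * ∫ x in Ioc (0:ℝ) 1, h x| := by
          have := abs_sub_le ((∫ x in Ioc (0:ℝ) 1, g (x / ε) * h x))
            (∫ x in Ioc (0:ℝ) 1, g (x / ε) * p.eval x) (c * ∫ x in Ioc (0:ℝ) 1, h x)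
          have h2 := abs_sub_le ((∫ x in Ioc (0:ℝ) 1, g (x / ε) * p.eval x))
            (c * ∫ x in Ioc (0:ℝ) 1, p.eval x) (c * ∫ x in Ioc (0:ℝ) 1, h x)
          linarith
    _ < M * (η / (2 * K)) + η / 2 + |c| * (η / (2 * K)) := by
        rw [Real.dist_eq] at hε1
        linarith [t1, t3, hε1]
    _ = (M + |c|) * (η / (2 * K)) + η / 2 := by ring
    _ < η / 2 + η / 2 := by linarith [hsum]
    _ = η := by ring
end

section
/- A priori estimate (abstract scalar version of Lemma 1): let m, e > 0 and d ∈ ℝ with d² < 4 m e (in weighted form: d² < 4/( (1/m)(1/e) )). Suppose v ∈ H₀¹(0,1) satisfies, for all φ ∈ H₀¹(0,1), ∫₀¹ m v φ + e v' φ' + d v φ' dx = ∫₀¹ (h + k u + j u') φ dx, where h, k, j ∈ ℝ are constants and u ∈ H¹(0,1). Then there exist constants m̃, ẽ > 0 and H̃, K̃, J̃ ≥ 0, depending only on m, e, d, h, k, j, such that m̃‖v‖²_{L²} + ẽ‖v'‖²_{L²} ≤ H̃ + K̃‖u‖²_{L²} + J̃‖u'‖²_{L²}. -/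
/-!
Test the weak formulation with `φ = v`. The convection term `d ∫ v v'` equals
`d (v(1)² - v(0)²) / 2 = 0`, so `m ‖v‖² + e ‖v'‖² = ∫ (h + k u + j u') v`. Young's inequality
`a b ≤ (ε/2) b² + a² / (2ε)` with `ε = m/3`, applied to each of the three source terms, bounds the
right-hand side by `(m/2) ‖v‖²` plus a multiple of `h² + k² ‖u‖² + j² ‖u'‖²`, and the first part is
absorbed into the left-hand side.
-/

open Set intervalIntegral
open MeasureTheory (volume)

theorem integral_mul_deriv_self {v v' : ℝ → ℝ} {a b : ℝ}
    (hv : ∀ x ∈ uIcc a b, HasDerivAt v (v' x) x) (hv' : IntervalIntegrable v' volume a b) :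
    ∫ x in a..b, v x * v' x = (v b ^ 2 - v a ^ 2) / 2 := by
  have h := integral_deriv_mul_eq_sub hv hv hv' hv'
  simp only [mul_comm (v' _), ← two_mul, integral_const_mul] at h
  linarith

theorem integral_energy_eq (m e d : ℝ) {v v' : ℝ → ℝ} {a b : ℝ}
    (hv : ∀ x, HasDerivAt v (v' x) x) (hv' : Continuous v') (hva : v a = 0) (hvb : v b = 0) :
    ∫ x in a..b, m * v x * v x + e * v' x * v' x + d * v x * v' x =
      m * (∫ x in a..b, v x ^ 2) + e * ∫ x in a..b, v' x ^ 2 := by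
  have hcv : Continuous v := continuous_iff_continuousAt.2 fun x ↦ (hv x).continuousAt
  have hconv : ∫ x in a..b, v x * v' x = 0 := by
    rw [integral_mul_deriv_self (fun x _ ↦ hv x) (hv'.intervalIntegrable a b), hva, hvb]
    norm_num
  calc ∫ x in a..b, m * v x * v x + e * v' x * v' x + d * v x * v' x
      = ∫ x in a..b, m * v x ^ 2 + e * v' x ^ 2 + d * (v x * v' x) := by
        congr 1; ext x; ring
    _ = m * (∫ x in a..b, v x ^ 2) + e * (∫ x in a..b, v' x ^ 2) +
          d * ∫ x in a..b, v x * v' x := by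
        rw [integral_add, integral_add, integral_const_mul, integral_const_mul, integral_const_mul]
        all_goals exact Continuous.intervalIntegrable (by fun_prop) _ _
    _ = m * (∫ x in a..b, v x ^ 2) + e * ∫ x in a..b, v' x ^ 2 := by
        rw [hconv, mul_zero, add_zero]

theorem mul_le_half_mul_sq_add_sq_div {ε : ℝ} (hε : 0 < ε) (a b : ℝ) :
    a * b ≤ ε / 2 * b ^ 2 + a ^ 2 / (2 * ε) := by
  have hsq : 0 ≤ (ε * b - a) ^ 2 / (2 * ε) := by positivity
  have hexp : (ε * b - a) ^ 2 / (2 * ε) = ε / 2 * b ^ 2 + a ^ 2 / (2 * ε) - a * b := by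
    field_simp; ring
  linarith

theorem integral_source_mul_le {ε : ℝ} (hε : 0 < ε) (h k j : ℝ) {u u' v : ℝ → ℝ}
    (hu : Continuous u) (hu' : Continuous u') (hv : Continuous v) {a b : ℝ} (hab : a ≤ b) :
    ∫ x in a..b, (h + k * u x + j * u' x) * v x ≤
      3 * ε / 2 * (∫ x in a..b, v x ^ 2) +
        ((b - a) * h ^ 2 + k ^ 2 * (∫ x in a..b, u x ^ 2) + j ^ 2 * ∫ x in a..b, u' x ^ 2) /
          (2 * ε) := by
  have hpt : ∀ x, (h + k * u x + j * u' x) * v x ≤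
      3 * ε / 2 * v x ^ 2 + (h ^ 2 + k ^ 2 * u x ^ 2 + j ^ 2 * u' x ^ 2) / (2 * ε) := by
    intro x
    have h₁ := mul_le_half_mul_sq_add_sq_div hε h (v x)
    have h₂ := mul_le_half_mul_sq_add_sq_div hε (k * u x) (v x)
    have h₃ := mul_le_half_mul_sq_add_sq_div hε (j * u' x) (v x)
    linear_combination h₁ + h₂ + h₃
  calc ∫ x in a..b, (h + k * u x + j * u' x) * v x
      ≤ ∫ x in a..b, 3 * ε / 2 * v x ^ 2 + (h ^ 2 + k ^ 2 * u x ^ 2 + j ^ 2 * u' x ^ 2) / (2 * ε) :=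
        integral_mono_on hab (Continuous.intervalIntegrable (by fun_prop) _ _)
          (Continuous.intervalIntegrable (by fun_prop) _ _) fun x _ ↦ hpt x
    _ = _ := by
        simp only [div_eq_mul_inv _ (2 * ε)]
        rw [integral_add, integral_const_mul, integral_mul_const, integral_add, integral_add,
          integral_const_mul, integral_const_mul, integral_const, smul_eq_mul]
        all_goals exact Continuous.intervalIntegrable (by fun_prop) _ _

theorem a_priori_estimate_general (m e d h k j : ℝ) (hm : 0 < m) (he : 0 < e) :
    ∃ mt et Ht Kt Jt : ℝ, 0 < mt ∧ 0 < et ∧ 0 ≤ Ht ∧ 0 ≤ Kt ∧ 0 ≤ Jt ∧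
      ∀ u u' v v' : ℝ → ℝ,
        (∀ x : ℝ, HasDerivAt u (u' x) x) → Continuous u' →
        (∀ x : ℝ, HasDerivAt v (v' x) x) → Continuous v' →
        v 0 = 0 → v 1 = 0 →
        (∀ φ φ' : ℝ → ℝ, (∀ x : ℝ, HasDerivAt φ (φ' x) x) → Continuous φ' →
          φ 0 = 0 → φ 1 = 0 →
          (∫ x in (0:ℝ)..1, m * v x * φ x + e * v' x * φ' x + d * v x * φ' x) =
            ∫ x in (0:ℝ)..1, (h + k * u x + j * u' x) * φ x) →
        mt * (∫ x in (0:ℝ)..1, (v x) ^ 2) + et * (∫ x in (0:ℝ)..1, (v' x) ^ 2) ≤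
          Ht + Kt * (∫ x in (0:ℝ)..1, (u x) ^ 2) +
            Jt * (∫ x in (0:ℝ)..1, (u' x) ^ 2) := by
  refine ⟨m / 2, e, 3 * h ^ 2 / (2 * m), 3 * k ^ 2 / (2 * m), 3 * j ^ 2 / (2 * m),
    by positivity, he, by positivity, by positivity, by positivity, ?_⟩
  intro u u' v v' hu hu' hv hv' hv0 hv1 hweak
  have henergy := hweak v v' hv hv' hv0 hv1
  rw [integral_energy_eq m e d hv hv' hv0 hv1] at henergy
  have hsource := integral_source_mul_le (by positivity : 0 < m / 3) h k j
    (continuous_iff_continuousAt.2 fun x ↦ (hu x).continuousAt) hu'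
    (continuous_iff_continuousAt.2 fun x ↦ (hv x).continuousAt) zero_le_one
  linear_combination henergy + hsource

/-- Scalar 1-D instance of the a priori estimate of Lemma 1: a weak solution
v ∈ H₀¹(0,1) of m v − (e v' + d v)' = h + k u + j u' satisfies an energy bound
in terms of u, with constants depending only on m, e, d, h, k, j. -/
theorem a_priori_estimate (m e d h k j : ℝ) (hm : 0 < m) (he : 0 < e)
    (hd : d ^ 2 < 4 * m * e) :
    ∃ mt et Ht Kt Jt : ℝ, 0 < mt ∧ 0 < et ∧ 0 ≤ Ht ∧ 0 ≤ Kt ∧ 0 ≤ Jt ∧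
      ∀ u u' v v' : ℝ → ℝ,
        (∀ x : ℝ, HasDerivAt u (u' x) x) → Continuous u' →
        (∀ x : ℝ, HasDerivAt v (v' x) x) → Continuous v' →
        v 0 = 0 → v 1 = 0 →
        (∀ φ φ' : ℝ → ℝ, (∀ x : ℝ, HasDerivAt φ (φ' x) x) → Continuous φ' →
          φ 0 = 0 → φ 1 = 0 →
          (∫ x in (0:ℝ)..1, m * v x * φ x + e * v' x * φ' x + d * v x * φ' x) =
            ∫ x in (0:ℝ)..1, (h + k * u x + j * u' x) * φ x) →
        mt * (∫ x in (0:ℝ)..1, (v x) ^ 2) + et * (∫ x in (0:ℝ)..1, (v' x) ^ 2) ≤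
          Ht + Kt * (∫ x in (0:ℝ)..1, (u x) ^ 2) +
            Jt * (∫ x in (0:ℝ)..1, (u' x) ^ 2) :=
  a_priori_estimate_general m e d h k j hm he
end

section
/- Weak two-scale limit of an oscillating product: let a : ℝ → ℝ be continuous and 1-periodic, and let (vε) ⊂ L²(0,1) be a sequence converging strongly in L²(0,1) to v. Then ∫₀¹ a(x/ε) vε(x) φ(x) dx → (∫₀¹ a(y) dy) ∫₀¹ v(x) φ(x) dx as ε → 0, for every φ ∈ C([0,1]). -/
/-!
Split `a (x / ε) vε φ = a (x / ε) φ (vε - v) + a (x / ε) v φ`. The first integral is bounded by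
`‖a‖∞ ‖φ‖∞ ‖vε - v‖_{L¹} ≤ ‖a‖∞ ‖φ‖∞ ‖vε - v‖_{L²}`, which tends to `0`. For the second, `a (· / ε)`
converges weakly-* to its mean `A`: the primitive `H` of `a - A` is periodic, hence bounded, so
integrating by parts against a polynomial `p` gives `∫ p (x) (a - A) (x / ε) dx = O(ε)`. Since the
multipliers `a (· / ε)` are uniformly bounded and polynomials are dense in `L¹(0, 1)`, this
extends to `v φ ∈ L¹(0, 1)`.
-/

open Set Filter MeasureTheory intervalIntegral Topology

namespace Function.Periodic

theorem exists_abs_le_of_continuous {f : ℝ → ℝ} {T : ℝ} (hf : Periodic f T) (hT : T ≠ 0)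
    (hc : Continuous f) : ∃ C, ∀ x, |f x| ≤ C := by
  obtain ⟨C, hC⟩ := (hf.isBounded_of_continuous hT hc).exists_norm_le
  exact ⟨C, fun x => hC _ (mem_range_self x)⟩

theorem primitive_periodic_of_integral_eq_zero {E : Type*} [NormedAddCommGroup E]
    [NormedSpace ℝ E] {f : ℝ → E} {T : ℝ} (hf : Periodic f T)
    (h_int : ∀ t₁ t₂, IntervalIntegrable f volume t₁ t₂) (h_mean : ∫ x in 0..T, f x = 0) :
    Periodic (fun t => ∫ x in 0..t, f x) T := fun t => by
  simp only [hf.intervalIntegral_add_eq_add 0 t h_int, zero_add, h_mean, add_zero]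

end Function.Periodic

/-- Integration by parts against `b (x / ε) = d/dx (ε H (x / ε))`. -/
theorem abs_integral_mul_comp_div_le {u u' b H : ℝ → ℝ} {s t M ε : ℝ} (hst : s ≤ t)
    (hε : 0 < ε) (hu : ∀ x, HasDerivAt u (u' x) x) (hu' : Continuous u') (hb : Continuous b)
    (hH : ∀ y, HasDerivAt H (b y) y) (hM : ∀ y, |H y| ≤ M) :
    |∫ x in s..t, u x * b (x / ε)| ≤ ε * M * (|u s| + |u t| + ∫ x in s..t, |u' x|) := by
  set G : ℝ → ℝ := fun x => ε * H (x / ε)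
  have hG : ∀ x, HasDerivAt G (b (x / ε)) x := fun x => by
    refine (((hH (x / ε)).comp x ((hasDerivAt_id x).div_const ε)).const_mul ε).congr_deriv ?_
    field_simp
  have hG_cont : Continuous G := continuous_iff_continuousAt.2 fun x => (hG x).continuousAt
  have hGM : ∀ x, |G x| ≤ ε * M := fun x => by
    rw [abs_mul, abs_of_pos hε]
    exact mul_le_mul_of_nonneg_left (hM _) hε.le
  rw [integral_mul_deriv_eq_deriv_mul (fun x _ => hu x) (fun x _ => hG x)
    (hu'.intervalIntegrable _ _) ((hb.comp (continuous_id.div_const ε)).intervalIntegrable _ _)]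
  have h_rest : |∫ x in s..t, u' x * G x| ≤ ε * M * ∫ x in s..t, |u' x| := by
    calc |∫ x in s..t, u' x * G x| ≤ ∫ x in s..t, |u' x * G x| :=
          abs_integral_le_integral_abs hst
      _ ≤ ∫ x in s..t, ε * M * |u' x| := by
          refine integral_mono_on hst ?_ ?_ fun x _ => ?_
          · exact (hu'.mul hG_cont).abs.intervalIntegrable _ _
          · exact (hu'.abs.const_mul _).intervalIntegrable _ _
          · rw [abs_mul, mul_comm]
            exact mul_le_mul_of_nonneg_right (hGM x) (abs_nonneg _)
      _ = ε * M * ∫ x in s..t, |u' x| := integral_const_mul _ _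
  have hs := mul_le_mul_of_nonneg_left (hGM s) (abs_nonneg (u s))
  have ht := mul_le_mul_of_nonneg_left (hGM t) (abs_nonneg (u t))
  calc |u t * G t - u s * G s - ∫ x in s..t, u' x * G x|
      ≤ |u t| * |G t| + |u s| * |G s| + |∫ x in s..t, u' x * G x| := by
        rw [← abs_mul, ← abs_mul]
        exact (abs_sub _ _).trans (add_le_add_left (abs_sub _ _) _)
    _ ≤ ε * M * (|u s| + |u t| + ∫ x in s..t, |u' x|) := by nlinarith

theorem tendsto_intervalIntegral_comp_div_mul_of_integral_eq_zero {b u u' : ℝ → ℝ}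
    (hb : Continuous b) (hper : Function.Periodic b 1) (h_mean : ∫ y in 0..1, b y = 0)
    (hu : ∀ x, HasDerivAt u (u' x) x) (hu' : Continuous u') {s t : ℝ} (hst : s ≤ t) :
    Tendsto (fun ε => ∫ x in s..t, b (x / ε) * u x) (𝓝[>] 0) (𝓝 0) := by
  set H : ℝ → ℝ := fun y => ∫ x in 0..y, b x
  have hH : ∀ y, HasDerivAt H (b y) y := fun y => (hb.integral_hasStrictDerivAt 0 y).hasDerivAt
  obtain ⟨M, hM⟩ := (hper.primitive_periodic_of_integral_eq_zero (hb.intervalIntegrable)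
    h_mean).exists_abs_le_of_continuous one_ne_zero
    (continuous_iff_continuousAt.2 fun y => (hH y).continuousAt)
  set K := M * (|u s| + |u t| + ∫ x in s..t, |u' x|)
  refine squeeze_zero_norm' (a := fun ε => ε * K) ?_ ?_
  · filter_upwards [self_mem_nhdsWithin] with ε (hε : 0 < ε)
    simp_rw [mul_comm (b _), Real.norm_eq_abs, K, ← mul_assoc]
    exact abs_integral_mul_comp_div_le hst hε hu hu' hb hH hM
  · exact tendsto_nhdsWithin_of_tendsto_nhds (by simpa using (continuous_mul_const K).tendsto 0)

theorem exists_polynomial_integral_abs_sub_le {g : ℝ → ℝ} {s t : ℝ}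
    (hg : IntegrableOn g (Ioc s t)) {δ : ℝ} (hδ : 0 < δ) :
    ∃ p : Polynomial ℝ, ∫ x in Ioc s t, |g x - p.eval x| ≤ δ := by
  obtain ⟨ψ, -, hgψ, hψ, hψ_int⟩ := hg.exists_hasCompactSupport_integral_sub_le (half_pos hδ)
  set m := volume.real (Ioc s t)
  have hm : 0 ≤ m := measureReal_nonneg
  set η := δ / (2 * (m + 1)) with hη_def
  have hη : 0 < η := by positivity
  obtain ⟨p, hp⟩ := exists_polynomial_near_of_continuousOn s t ψ hψ.continuousOn η hη
  refine ⟨p, ?_⟩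
  have hψp : ∫ x in Ioc s t, |ψ x - p.eval x| ≤ δ / 2 := by
    calc ∫ x in Ioc s t, |ψ x - p.eval x| ≤ ∫ x in Ioc s t, η := by
          refine setIntegral_mono_on (hψ.sub p.continuous).abs.integrableOn_Ioc
            (integrableOn_const measure_Ioc_lt_top.ne) measurableSet_Ioc fun x hx => ?_
          rw [abs_sub_comm]
          exact (hp x (Ioc_subset_Icc_self hx)).le
      _ = m * η := by rw [setIntegral_const, smul_eq_mul]
      _ ≤ (m + 1) * η := by nlinarith
      _ = δ / 2 := by rw [hη_def]; field_simp
  have hgψ_int : IntegrableOn (fun x => |g x - ψ x|) (Ioc s t) := (hg.sub hψ_int).abs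
  have hψp_int : IntegrableOn (fun x => |ψ x - p.eval x|) (Ioc s t) :=
    (hψ.sub p.continuous).abs.integrableOn_Ioc
  calc ∫ x in Ioc s t, |g x - p.eval x|
      ≤ ∫ x in Ioc s t, (|g x - ψ x| + |ψ x - p.eval x|) :=
        integral_mono (hg.sub p.continuous.integrableOn_Ioc).abs (hgψ_int.add hψp_int)
          fun x => abs_sub_le _ _ _
    _ = (∫ x in Ioc s t, |g x - ψ x|) + ∫ x in Ioc s t, |ψ x - p.eval x| :=
        integral_add hgψ_int hψp_int
    _ ≤ δ := by simp only [Real.norm_eq_abs] at hgψ; linarith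

section BoundedMultiplier

variable {α ι : Type*} [MeasurableSpace α] {μ : Measure α} {l : Filter ι}

theorem abs_integral_mul_le_of_abs_le {f g : α → ℝ} {C : ℝ} (hfC : ∀ᵐ x ∂μ, |f x| ≤ C)
    (hg : Integrable g μ) : |∫ x, f x * g x ∂μ| ≤ C * ∫ x, |g x| ∂μ := by
  rw [← MeasureTheory.integral_const_mul, ← Real.norm_eq_abs]
  refine norm_integral_le_of_norm_le (hg.abs.const_mul C) ?_
  filter_upwards [hfC] with x hx
  rw [Real.norm_eq_abs, abs_mul]
  exact mul_le_mul_of_nonneg_right hx (abs_nonneg _)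

theorem tendsto_integral_mul_of_approx {f : ι → α → ℝ} {C : ℝ}
    (hf : ∀ i, AEStronglyMeasurable (f i) μ) (hfC : ∀ i, ∀ᵐ x ∂μ, |f i x| ≤ C)
    {g : α → ℝ} (hg : Integrable g μ)
    (h_approx : ∀ δ > 0, ∃ h : α → ℝ, Integrable h μ ∧ ∫ x, |g x - h x| ∂μ ≤ δ ∧
      Tendsto (fun i => ∫ x, f i x * h x ∂μ) l (𝓝 0)) :
    Tendsto (fun i => ∫ x, f i x * g x ∂μ) l (𝓝 0) := by
  rw [Metric.tendsto_nhds]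
  intro r hr
  obtain ⟨h, hh, hgh, h_lim⟩ := h_approx (r / (2 * (|C| + 1))) (by positivity)
  filter_upwards [Metric.tendsto_nhds.1 h_lim (r / 2) (half_pos hr)] with i hi
  rw [Real.dist_eq, sub_zero] at hi ⊢
  have h_split : ∫ x, f i x * g x ∂μ = ∫ x, f i x * (g x - h x) ∂μ + ∫ x, f i x * h x ∂μ := by
    have h_int : Integrable (fun x => f i x * (g x - h x)) μ := (hg.sub hh).bdd_mul (hf i) (hfC i)
    rw [← integral_add h_int (hh.bdd_mul (hf i) (hfC i))]
    simp only [mul_sub, sub_add_cancel]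
  have hfC' : ∀ᵐ x ∂μ, |f i x| ≤ |C| := by
    filter_upwards [hfC i] with x hx using hx.trans (le_abs_self C)
  have h_err : |∫ x, f i x * (g x - h x) ∂μ| ≤ |C| * (r / (2 * (|C| + 1))) :=
    (abs_integral_mul_le_of_abs_le hfC' (hg.sub hh)).trans
      (mul_le_mul_of_nonneg_left hgh (abs_nonneg C))
  have h_small : |C| * (r / (2 * (|C| + 1))) < r / 2 := by
    rw [mul_div_assoc', div_lt_div_iff₀ (by positivity) two_pos]
    nlinarith [abs_nonneg C]
  rw [h_split]
  linarith [abs_add_le (∫ x, f i x * (g x - h x) ∂μ) (∫ x, f i x * h x ∂μ)]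

theorem tendsto_integral_mul_of_tendsto_eLpNorm [IsProbabilityMeasure μ] {p : ENNReal}
    (hp : 1 ≤ p) {f g : ι → α → ℝ} {C : ℝ} (hfC : ∀ i, ∀ᵐ x ∂μ, |f i x| ≤ C)
    (hg : ∀ᶠ i in l, MemLp (g i) p μ) (h_lim : Tendsto (fun i => eLpNorm (g i) p μ) l (𝓝 0)) :
    Tendsto (fun i => ∫ x, f i x * g i x ∂μ) l (𝓝 0) := by
  refine squeeze_zero_norm' (a := fun i => C * (eLpNorm (g i) p μ).toReal) ?_ ?_
  · filter_upwards [hg] with i hgi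
    obtain ⟨x, hx⟩ := (hfC i).exists
    have h_L1 : ∫ x, |g i x| ∂μ ≤ (eLpNorm (g i) p μ).toReal := by
      simp_rw [← Real.norm_eq_abs]
      rw [integral_norm_eq_lintegral_enorm hgi.aestronglyMeasurable,
        ← eLpNorm_one_eq_lintegral_enorm]
      exact ENNReal.toReal_mono hgi.eLpNorm_ne_top
        (eLpNorm_le_eLpNorm_of_exponent_le hp hgi.aestronglyMeasurable)
    exact (abs_integral_mul_le_of_abs_le (hfC i) (hgi.integrable hp)).trans
      (mul_le_mul_of_nonneg_left h_L1 ((abs_nonneg _).trans hx))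
  · simpa using (ENNReal.tendsto_toReal ENNReal.zero_ne_top |>.comp h_lim).const_mul C

end BoundedMultiplier

theorem tendsto_setIntegral_comp_div_mul {a g : ℝ → ℝ} (ha : Continuous a)
    (hper : Function.Periodic a 1) {s t : ℝ} (hst : s ≤ t) (hg : IntegrableOn g (Ioc s t)) :
    Tendsto (fun ε => ∫ x in Ioc s t, a (x / ε) * g x) (𝓝[>] 0)
      (𝓝 ((∫ y in 0..1, a y) * ∫ x in Ioc s t, g x)) := by
  set A := ∫ y in 0..1, a y
  set b : ℝ → ℝ := fun y => a y - A
  have hb : Continuous b := ha.sub continuous_const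
  have hb_per : Function.Periodic b 1 := fun y => by simp only [b, hper y]
  have hb_mean : ∫ y in 0..1, b y = 0 := by
    simp [b, integral_sub (ha.intervalIntegrable 0 1) intervalIntegrable_const, A]
  obtain ⟨C, hC⟩ := hb_per.exists_abs_le_of_continuous one_ne_zero hb
  have hb_ε : ∀ ε, Continuous fun x => b (x / ε) := fun ε => by fun_prop
  have hb_int : ∀ ε, IntegrableOn (fun x => b (x / ε) * g x) (Ioc s t) := fun ε =>
    hg.bdd_mul (hb_ε ε).aestronglyMeasurable (ae_of_all _ fun _ => hC _)
  have h_osc : Tendsto (fun ε => ∫ x in Ioc s t, b (x / ε) * g x) (𝓝[>] 0) (𝓝 0) := by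
    refine tendsto_integral_mul_of_approx
      (fun ε => (hb_ε ε).aestronglyMeasurable)
      (fun ε => ae_of_all _ fun _ => hC _) hg fun δ hδ => ?_
    obtain ⟨p, hp⟩ := exists_polynomial_integral_abs_sub_le hg hδ
    refine ⟨_, p.continuous.integrableOn_Ioc, hp, ?_⟩
    simpa only [integral_of_le hst] using
      tendsto_intervalIntegral_comp_div_mul_of_integral_eq_zero hb hb_per hb_mean
        (fun x => p.hasDerivAt x) p.derivative.continuous hst
  have h_lim := h_osc.add_const (A * ∫ x in Ioc s t, g x)
  rw [zero_add] at h_lim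
  refine h_lim.congr fun ε => ?_
  rw [← MeasureTheory.integral_const_mul, ← integral_add (hb_int ε) (hg.const_mul A)]
  congr 1 with x
  simp only [b]
  ring

/-- Compensated convergence: an oscillating periodic factor times a strongly
L²-convergent sequence converges to the product of the mean and the limit. -/
theorem oscillating_product_limit (a : ℝ → ℝ) (ha : Continuous a)
    (haper : ∀ y, a (y + 1) = a y)
    (v : ℝ → ℝ → ℝ) (vlim : ℝ → ℝ)
    (hv : ∀ ε ∈ Ioi (0:ℝ), MemLp (v ε) 2 (volume.restrict (Ioc (0:ℝ) 1)))
    (hvlim : MemLp vlim 2 (volume.restrict (Ioc (0:ℝ) 1)))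
    (hstrong : Tendsto (fun ε : ℝ =>
        eLpNorm (fun x => v ε x - vlim x) 2 (volume.restrict (Ioc (0:ℝ) 1)))
      (nhdsWithin 0 (Ioi 0)) (nhds 0))
    (φ : ℝ → ℝ) (hφ : ContinuousOn φ (Icc 0 1)) :
    Tendsto (fun ε : ℝ => ∫ x in Ioc (0:ℝ) 1, a (x / ε) * v ε x * φ x)
      (nhdsWithin 0 (Ioi 0))
      (nhds ((∫ y in (0:ℝ)..1, a y) * ∫ x in Ioc (0:ℝ) 1, vlim x * φ x)) := by
  set μ := volume.restrict (Ioc (0:ℝ) 1)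
  have : IsProbabilityMeasure μ := ⟨by simp [μ]⟩
  obtain ⟨Ca, hCa⟩ := Function.Periodic.exists_abs_le_of_continuous haper one_ne_zero ha
  obtain ⟨Cφ, hCφ⟩ := isCompact_Icc.exists_bound_of_continuousOn hφ
  have hφ_meas : AEStronglyMeasurable φ μ :=
    (hφ.mono Ioc_subset_Icc_self).aestronglyMeasurable measurableSet_Ioc
  have hφ_bdd : ∀ᵐ x ∂μ, |φ x| ≤ Cφ := by
    filter_upwards [ae_restrict_mem measurableSet_Ioc] with x hx
    exact hCφ x (Ioc_subset_Icc_self hx)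
  have ha_ε : ∀ ε, Continuous fun x => a (x / ε) := fun ε => by fun_prop
  have hK_bdd : ∀ ε, ∀ᵐ x ∂μ, |a (x / ε) * φ x| ≤ Ca * Cφ := fun ε => by
    filter_upwards [hφ_bdd] with x hx
    rw [abs_mul]
    exact mul_le_mul (hCa _) hx (abs_nonneg _) ((abs_nonneg _).trans (hCa 0))
  have h_diff : ∀ᶠ ε in 𝓝[>] 0, MemLp (fun x => v ε x - vlim x) 2 μ := by
    filter_upwards [self_mem_nhdsWithin] with ε hε using (hv ε hε).sub hvlim
  have hvφ : Integrable (fun x => vlim x * φ x) μ := by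
    simpa only [mul_comm] using (hvlim.integrable one_le_two).bdd_mul hφ_meas hφ_bdd
  have h_err := tendsto_integral_mul_of_tendsto_eLpNorm one_le_two hK_bdd h_diff hstrong
  have h_lim := h_err.add (tendsto_setIntegral_comp_div_mul ha haper zero_le_one hvφ)
  rw [zero_add] at h_lim
  refine h_lim.congr' ?_
  filter_upwards [h_diff] with ε hε
  refine (integral_add
    ((hε.integrable one_le_two).bdd_mul ((ha_ε ε).aestronglyMeasurable.mul hφ_meas) (hK_bdd ε))
    (hvφ.bdd_mul (ha_ε ε).aestronglyMeasurable (ae_of_all _ fun _ => hCa _))).symm.trans ?_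
  congr 1 with x
  simp only [Pi.mul_apply]
  ring
end
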